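/- arXiv:2203.16485 — 2 statements merged into one kernel-verified Lean document; each statement's English description precedes it below -/
import Mathlib

section
/- Consider a single affine-control system ẋ = F₀(x) + F(x)u on ℝⁿ with fixed parameter θ ∈ Θ (F₀, F Lipschitz), and a sequence of controls (u_m) ⊂ L²([0,1],ℝ^k) with u_m ⇀ u_∞ weakly in L². Let x_m^θ be the solution corresponding to u_m. Then x_m^θ → x_∞^θ in the C⁰([0,1],ℝⁿ) norm as m → ∞. -/
/-!
Weak convergence alone does not control `∫₀ᵗ B(x_m) u_m`, but it does make
`Φ_m(t) = ∫₀ᵗ B(x_∞(s)) u_m(s) ds` converge to `Φ_∞(t)` for each fixed `t`: pair with a vector `e`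
and test `u_m` against `𝟙_[0,t] B(x_∞)* e`. The `u_m` are bounded in `L²` (Banach–Steinhaus), so
the `Φ_m` are uniformly `1/2`-Hölder and, by Ascoli, converge uniformly. Then
`x_m - x_∞ = ∫ [f(x_m) - f(x_∞) + (B(x_m) - B(x_∞)) u_m] + (Φ_m - Φ_∞)`, where the integrand is
bounded by `(K_f + K_B ‖u_m‖) ‖x_m - x_∞‖`; Cauchy–Schwarz turns this into a Grönwall inequality for
`∫₀ᵗ ‖x_m - x_∞‖²`, giving `‖x_m - x_∞‖ ≤ κ sup ‖Φ_m - Φ_∞‖` with `κ` depending only on the `L²`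
bound of the controls.
-/

open MeasureTheory Set Filter Topology

noncomputable section

variable {n d k : ℕ}

/-- `x` is the trajectory on `[0,1]` of the affine-control system
`ẋ(t) = F₀(x(t),θ) + Σᵢ uᵢ(t) Fᵢ(x(t),θ)`, `x(0) = x₀(θ)`,
written in integral (Carathéodory) form. -/
def IsTrajectory
    (F0 : EuclideanSpace ℝ (Fin n) → EuclideanSpace ℝ (Fin d) → EuclideanSpace ℝ (Fin n))
    (F : Fin k → EuclideanSpace ℝ (Fin n) → EuclideanSpace ℝ (Fin d) →
      EuclideanSpace ℝ (Fin n))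
    (x0 : EuclideanSpace ℝ (Fin d) → EuclideanSpace ℝ (Fin n))
    (u : ℝ → EuclideanSpace ℝ (Fin k)) (θ : EuclideanSpace ℝ (Fin d))
    (x : ℝ → EuclideanSpace ℝ (Fin n)) : Prop :=
  ContinuousOn x (Icc 0 1) ∧
    ∀ t ∈ Icc (0 : ℝ) 1,
      x t = x0 θ + ∫ s in (0 : ℝ)..t, (F0 (x s) θ + ∑ i, u s i • F i (x s) θ)

/-- The squared `L²([0,1])` norm of a control. -/
def l2sq (u : ℝ → EuclideanSpace ℝ (Fin k)) : ℝ :=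
  ∫ t in Icc (0 : ℝ) 1, ‖u t‖ ^ 2

/-- Weak convergence `u_m ⇀ u_∞` in `L²([0,1],ℝ^k)`. -/
def WeakL2 (u : ℕ → ℝ → EuclideanSpace ℝ (Fin k))
    (uinf : ℝ → EuclideanSpace ℝ (Fin k)) : Prop :=
  ∀ v : ℝ → EuclideanSpace ℝ (Fin k), MemLp v 2 (volume.restrict (Icc (0 : ℝ) 1)) →
    Tendsto (fun m => ∫ t in Icc (0 : ℝ) 1, (inner ℝ (v t) (u m t) : ℝ)) atTop
      (𝓝 (∫ t in Icc (0 : ℝ) 1, (inner ℝ (v t) (uinf t) : ℝ)))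

section L2

variable {α E : Type*} [MeasurableSpace α] {μ : Measure α} [NormedAddCommGroup E]

theorem integral_mul_le_sqrt_mul_sqrt {f g : α → ℝ} (hf : MemLp f 2 μ) (hg : MemLp g 2 μ) :
    ∫ a, f a * g a ∂μ ≤ √(∫ a, f a ^ 2 ∂μ) * √(∫ a, g a ^ 2 ∂μ) := by
  have hfg : ∫ a, f a * g a ∂μ ≤ ∫ a, ‖f a‖ * ‖g a‖ ∂μ :=
    integral_mono (hf.integrable_mul hg) (hf.norm.integrable_mul hg.norm) fun a =>
      (le_abs_self _).trans (abs_mul _ _).le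
  have holder := integral_mul_norm_le_Lp_mul_Lq Real.HolderConjugate.two_two
    (by simpa using hf) (by simpa using hg)
  simp only [Real.rpow_two, Real.norm_eq_abs, sq_abs, ← Real.sqrt_eq_rpow] at holder
  simpa only [Real.norm_eq_abs] using hfg.trans holder

theorem integral_norm_le_sqrt_mul_sqrt [IsFiniteMeasure μ] {g : α → E} (hg : MemLp g 2 μ) :
    ∫ a, ‖g a‖ ∂μ ≤ √(∫ a, ‖g a‖ ^ 2 ∂μ) * √(μ.real univ) := by
  simpa using integral_mul_le_sqrt_mul_sqrt hg.norm (memLp_const (1 : ℝ))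

theorem norm_intervalIntegral_le_sqrt_mul_sqrt [NormedSpace ℝ E] {g : ℝ → E} {s : Set ℝ}
    {a b : ℝ} (hab : uIoc a b ⊆ s) (hg : MemLp g 2 (volume.restrict s)) :
    ‖∫ t in a..b, g t‖ ≤ √(∫ t in s, ‖g t‖ ^ 2) * √|b - a| := by
  have hg' : MemLp g 2 (volume.restrict (uIoc a b)) :=
    hg.mono_measure (Measure.restrict_mono hab le_rfl)
  have : IsFiniteMeasure (volume.restrict (uIoc a b)) :=
    isFiniteMeasure_restrict.mpr (by simp [Real.volume_uIoc])
  have hsq : ∫ t in uIoc a b, ‖g t‖ ^ 2 ≤ ∫ t in s, ‖g t‖ ^ 2 :=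
    setIntegral_mono_set ((memLp_two_iff_integrable_sq_norm hg.1).1 hg)
      (Eventually.of_forall fun _ => by positivity) hab.eventuallyLE
  calc ‖∫ t in a..b, g t‖ = ‖∫ t in uIoc a b, g t‖ :=
        intervalIntegral.norm_integral_eq_norm_integral_uIoc g
    _ ≤ ∫ t in uIoc a b, ‖g t‖ := norm_integral_le_integral_norm g
    _ ≤ √(∫ t in uIoc a b, ‖g t‖ ^ 2) * √|b - a| := by
      simpa [Measure.real, Real.volume_uIoc] using integral_norm_le_sqrt_mul_sqrt hg'
    _ ≤ √(∫ t in s, ‖g t‖ ^ 2) * √|b - a| := by gcongr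

end L2

section WeakBound

variable {α H : Type*} [MeasurableSpace α] {μ : Measure α}
  [NormedAddCommGroup H] [InnerProductSpace ℝ H]

theorem MeasureTheory.MemLp.integral_norm_sq_eq {f : α → H} (hf : MemLp f 2 μ) :
    ∫ a, ‖f a‖ ^ 2 ∂μ = ‖hf.toLp f‖ ^ 2 := by
  rw [← real_inner_self_eq_norm_sq, L2.inner_def]
  refine integral_congr_ae ?_
  filter_upwards [hf.coeFn_toLp] with a ha
  rw [ha, real_inner_self_eq_norm_sq]

theorem MeasureTheory.MemLp.inner_toLp_eq_integral {f g : α → H} (hf : MemLp f 2 μ)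
    (hg : MemLp g 2 μ) :
    inner ℝ (hf.toLp f) (hg.toLp g) = ∫ a, inner ℝ (f a) (g a) ∂μ := by
  rw [L2.inner_def]
  refine integral_congr_ae ?_
  filter_upwards [hf.coeFn_toLp, hg.coeFn_toLp] with a hfa hga
  rw [hfa, hga]

theorem exists_integral_norm_sq_le_of_tendsto_integral_inner [CompleteSpace H]
    {u : ℕ → α → H} {uinf : α → H} (hu : ∀ m, MemLp (u m) 2 μ)
    (hweak : ∀ v, MemLp v 2 μ → Tendsto (fun m => ∫ a, inner ℝ (v a) (u m a) ∂μ) atTop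
      (𝓝 (∫ a, inner ℝ (v a) (uinf a) ∂μ))) :
    ∃ C, ∀ m, ∫ a, ‖u m a‖ ^ 2 ∂μ ≤ C := by
  let U m : Lp H 2 μ := (hu m).toLp
  have hbdd : ∀ V : Lp H 2 μ, ∃ C, ∀ m, ‖innerSL ℝ (U m) V‖ ≤ C := by
    intro V
    obtain ⟨C, hC⟩ := (hweak V (Lp.memLp V)).norm.bddAbove_range
    refine ⟨C, fun m => ?_⟩
    have hV : (Lp.memLp V).toLp V = V := Lp.toLp_coeFn V (Lp.memLp V)
    rw [innerSL_apply_apply, real_inner_comm, ← hV, (Lp.memLp V).inner_toLp_eq_integral (hu m)]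
    exact hC ⟨m, rfl⟩
  obtain ⟨C, hC⟩ := banach_steinhaus hbdd
  refine ⟨C ^ 2, fun m => ?_⟩
  rw [(hu m).integral_norm_sq_eq]
  have := hC m
  rw [innerSL_apply_norm] at this
  gcongr

end WeakBound

theorem gronwallBound_δ0 (K ε x : ℝ) :
    gronwallBound 0 K ε x = ε * gronwallBound 0 K 1 x := by
  unfold gronwallBound
  split_ifs <;> ring

theorem le_mul_of_le_add_mul_sqrt_integral_sq {ψ : ℝ → ℝ} (hψ : ContinuousOn ψ (Icc 0 1))
    (hψ0 : ∀ t ∈ Icc (0 : ℝ) 1, 0 ≤ ψ t) {a β : ℝ} (ha : 0 ≤ a) (hβ : 0 ≤ β)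
    (h : ∀ t ∈ Icc (0 : ℝ) 1, ψ t ≤ a + β * √(∫ s in 0..t, ψ s ^ 2)) :
    ∀ t ∈ Icc (0 : ℝ) 1, ψ t ≤ a * (1 + β * √(2 * gronwallBound 0 (2 * β ^ 2) 1 1)) := by
  wlog hψc : Continuous ψ generalizing ψ
  · set ψ' := IccExtend zero_le_one ((Icc (0 : ℝ) 1).domRestrict ψ)
    have hψ'c : Continuous ψ' := continuous_IccExtend_iff.mpr hψ.domRestrict
    have heq : EqOn ψ' ψ (Icc 0 1) := fun t ht => IccExtend_of_mem _ _ ht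
    have hint : ∀ t ∈ Icc (0 : ℝ) 1, ∫ s in 0..t, ψ' s ^ 2 = ∫ s in 0..t, ψ s ^ 2 :=
      fun t ht => intervalIntegral.integral_congr fun s hs => by
        rw [heq (uIcc_subset_Icc (left_mem_Icc.mpr zero_le_one) ht hs)]
    intro t ht
    rw [← heq ht]
    refine this hψ'c.continuousOn (fun s hs => heq hs ▸ hψ0 s hs) (fun s hs => ?_) hψ'c t ht
    rw [heq hs, hint s hs]
    exact h s hs
  set W : ℝ → ℝ := fun t => ∫ s in 0..t, ψ s ^ 2
  set g := gronwallBound 0 (2 * β ^ 2) 1 1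
  have hW : ∀ t, HasDerivAt W (ψ t ^ 2) t := fun t =>
    intervalIntegral.integral_hasDerivAt_right ((hψc.pow 2).intervalIntegrable _ _)
      (hψc.pow 2).aestronglyMeasurable.stronglyMeasurableAtFilter (hψc.pow 2).continuousAt
  have hW0 : ∀ t ∈ Icc (0 : ℝ) 1, 0 ≤ W t := fun t ht =>
    intervalIntegral.integral_nonneg ht.1 fun s _ => sq_nonneg _
  have hWψ : ∀ t ∈ Ico (0 : ℝ) 1, ‖ψ t ^ 2‖ ≤ 2 * β ^ 2 * ‖W t‖ + 2 * a ^ 2 := by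
    intro t ht
    have ht' := Ico_subset_Icc_self ht
    have hsq := Real.sq_sqrt (hW0 t ht')
    rw [Real.norm_of_nonneg (sq_nonneg _), Real.norm_of_nonneg (hW0 t ht')]
    nlinarith [h t ht', hψ0 t ht', Real.sqrt_nonneg (W t), sq_nonneg (a - β * √(W t))]
  have hg0 : 0 ≤ g := by
    simpa [gronwallBound_x0] using gronwallBound_mono le_rfl zero_le_one (by positivity)
      (zero_le_one : (0 : ℝ) ≤ 1)
  have hWg : ∀ t ∈ Icc (0 : ℝ) 1, W t ≤ a ^ 2 * (2 * g) := by
    intro t ht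
    calc W t ≤ gronwallBound 0 (2 * β ^ 2) (2 * a ^ 2) (t - 0) :=
          (le_abs_self _).trans <| norm_le_gronwallBound_of_norm_deriv_right_le
            (fun s _ => (hW s).continuousAt.continuousWithinAt) (fun s _ => (hW s).hasDerivWithinAt)
            (by simp [W]) hWψ t ht
      _ ≤ gronwallBound 0 (2 * β ^ 2) (2 * a ^ 2) 1 :=
          gronwallBound_mono le_rfl (by positivity) (by positivity) (by linarith [ht.2])
      _ = a ^ 2 * (2 * g) := by rw [gronwallBound_δ0]; ring
  intro t ht
  calc ψ t ≤ a + β * √(W t) := h t ht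
    _ ≤ a + β * √(a ^ 2 * (2 * g)) := by gcongr; exact hWg t ht
    _ = a * (1 + β * √(2 * g)) := by rw [Real.sqrt_mul' _ (by positivity), Real.sqrt_sq ha]; ring

theorem le_mul_of_le_add_integral_mul {ψ φ : ℝ → ℝ} (hψ : ContinuousOn ψ (Icc 0 1))
    (hψ0 : ∀ t ∈ Icc (0 : ℝ) 1, 0 ≤ ψ t) (hφ : MemLp φ 2 (volume.restrict (Icc 0 1)))
    {a β : ℝ} (ha : 0 ≤ a) (hβ : 0 ≤ β) (hφβ : ∫ s in Icc 0 1, φ s ^ 2 ≤ β ^ 2)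
    (h : ∀ t ∈ Icc (0 : ℝ) 1, ψ t ≤ a + ∫ s in 0..t, φ s * ψ s) :
    ∀ t ∈ Icc (0 : ℝ) 1, ψ t ≤ a * (1 + β * √(2 * gronwallBound 0 (2 * β ^ 2) 1 1)) := by
  have hψL2 : MemLp ψ 2 (volume.restrict (Icc 0 1)) :=
    (memLp_two_iff_integrable_sq (hψ.aestronglyMeasurable measurableSet_Icc)).mpr
      (hψ.pow 2).integrableOn_Icc
  refine le_mul_of_le_add_mul_sqrt_integral_sq hψ hψ0 ha hβ fun t ht => (h t ht).trans ?_
  have hsub : Ioc 0 t ⊆ Icc (0 : ℝ) 1 := Ioc_subset_Icc_self.trans (Icc_subset_Icc_right ht.2)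
  have hle : volume.restrict (Ioc 0 t) ≤ volume.restrict (Icc 0 1) :=
    Measure.restrict_mono hsub le_rfl
  have hφt : √(∫ s in Ioc 0 t, φ s ^ 2) ≤ β :=
    Real.sqrt_le_iff.mpr ⟨hβ, (setIntegral_mono_set hφ.integrable_sq
      (Eventually.of_forall fun _ => sq_nonneg _) hsub.eventuallyLE).trans hφβ⟩
  rw [intervalIntegral.integral_of_le ht.1, intervalIntegral.integral_of_le ht.1]
  gcongr
  exact (integral_mul_le_sqrt_mul_sqrt (hφ.mono_measure hle) (hψL2.mono_measure hle)).trans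
    (by gcongr)

section AffineControl

variable {E H : Type*} [NormedAddCommGroup E] [NormedSpace ℝ E]
  [NormedAddCommGroup H] [NormedSpace ℝ H]

theorem MeasureTheory.MemLp.clm_apply_of_norm_le {α : Type*} [MeasurableSpace α] {μ : Measure α}
    {p : ENNReal} {A : α → H →L[ℝ] E} {u : α → H} {M : ℝ} (hu : MemLp u p μ)
    (hA : AEStronglyMeasurable A μ) (hAM : ∀ᵐ a ∂μ, ‖A a‖ ≤ M) :
    MemLp (fun a => A a (u a)) p μ :=
  hu.of_le_mul ((continuous_fst.clm_apply continuous_snd).comp_aestronglyMeasurable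
      (hA.prodMk hu.1))
    (hAM.mono fun a ha => ((A a).le_opNorm _).trans (by gcongr))

theorem ContinuousOn.memLp_clm_apply {K : Set ℝ} {p : ENNReal} {A : ℝ → H →L[ℝ] E} {u : ℝ → H}
    (hA : ContinuousOn A K) (hK : IsCompact K) (hu : MemLp u p (volume.restrict K)) :
    MemLp (fun s => A s (u s)) p (volume.restrict K) :=
  have ⟨_, hM⟩ := hK.exists_bound_of_continuousOn hA
  hu.clm_apply_of_norm_le (hA.aestronglyMeasurable hK.measurableSet)
    (ae_restrict_of_forall_mem hK.measurableSet hM)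

theorem norm_sub_intervalIntegral_clm_apply_le {A : ℝ → H →L[ℝ] E} {u : ℝ → H} {M C : ℝ}
    (hA : AEStronglyMeasurable A (volume.restrict (Icc 0 1)))
    (hAM : ∀ᵐ s ∂(volume.restrict (Icc (0 : ℝ) 1)), ‖A s‖ ≤ M)
    (hu : MemLp u 2 (volume.restrict (Icc 0 1))) (hC : ∫ s in Icc 0 1, ‖u s‖ ^ 2 ≤ C) {a b : ℝ}
    (ha : a ∈ Icc (0 : ℝ) 1) (hb : b ∈ Icc (0 : ℝ) 1) :
    ‖(∫ s in 0..a, A s (u s)) - ∫ s in 0..b, A s (u s)‖ ≤ √(M ^ 2 * C) * √|a - b| := by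
  have hAu := hu.clm_apply_of_norm_le hA hAM
  have hint : ∀ r ∈ Icc (0 : ℝ) 1, IntervalIntegrable (fun s => A s (u s)) volume 0 r :=
    fun r hr => (IntegrableOn.mono_set (hAu.integrable one_le_two)
      (uIcc_subset_Icc (left_mem_Icc.mpr zero_le_one) hr)).intervalIntegrable
  rw [intervalIntegral.integral_interval_sub_left (hint a ha) (hint b hb)]
  refine (norm_intervalIntegral_le_sqrt_mul_sqrt
    (uIoc_subset_uIcc.trans (uIcc_subset_Icc hb ha)) hAu).trans ?_
  gcongr
  calc ∫ s in Icc 0 1, ‖A s (u s)‖ ^ 2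
      ≤ ∫ s in Icc 0 1, M ^ 2 * ‖u s‖ ^ 2 :=
        integral_mono_ae ((memLp_two_iff_integrable_sq_norm hAu.1).mp hAu)
          (((memLp_two_iff_integrable_sq_norm hu.1).mp hu).const_mul _)
          (hAM.mono fun s hs => by
            show ‖A s (u s)‖ ^ 2 ≤ M ^ 2 * ‖u s‖ ^ 2
            rw [← mul_pow]
            exact pow_le_pow_left₀ (norm_nonneg _) (((A s).le_opNorm _).trans (by gcongr)) 2)
    _ ≤ M ^ 2 * C := by rw [integral_const_mul]; gcongr

/-- Integral (Carathéodory) form of `ẋ = f(x) + B(x) u`, `x(0) = ξ`, on `[0,1]`. -/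
def IsAffineControlTrajectory (f : E → E) (B : E → H →L[ℝ] E) (ξ : E) (u : ℝ → H)
    (x : ℝ → E) : Prop :=
  ContinuousOn x (Icc 0 1) ∧ ∀ t ∈ Icc (0 : ℝ) 1, x t = ξ + ∫ s in 0..t, (f (x s) + B (x s) (u s))

variable {f : E → E} {B : E → H →L[ℝ] E} {ξ : E} {u v : ℝ → H} {x y : ℝ → E} {Kf KB : NNReal}

theorem IsAffineControlTrajectory.sub_eq (hf : Continuous f) (hB : Continuous B)
    (hx : IsAffineControlTrajectory f B ξ u x) (hy : IsAffineControlTrajectory f B ξ v y)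
    (hu : MemLp u 2 (volume.restrict (Icc 0 1))) (hv : MemLp v 2 (volume.restrict (Icc 0 1))) :
    ∀ t ∈ Icc (0 : ℝ) 1, x t - y t = (∫ s in 0..t, (f (x s) - f (y s) + (B (x s) - B (y s)) (u s)))
      + ((∫ s in 0..t, B (y s) (u s)) - ∫ s in 0..t, B (y s) (v s)) := by
  intro t ht
  have hsub : uIcc 0 t ⊆ Icc (0 : ℝ) 1 := uIcc_subset_Icc (left_mem_Icc.mpr zero_le_one) ht
  have hfx := hf.comp_continuousOn hx.1
  have hfy := hf.comp_continuousOn hy.1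
  have hBy := hB.comp_continuousOn hy.1
  have iL2 : ∀ {g : ℝ → E}, MemLp g 2 (volume.restrict (Icc 0 1)) →
      IntervalIntegrable g volume 0 t := fun hg =>
    (IntegrableOn.mono_set (hg.integrable one_le_two) hsub).intervalIntegrable
  have iFy : IntervalIntegrable (fun s => f (y s)) volume 0 t := (hfy.mono hsub).intervalIntegrable
  have iBy : ∀ w : ℝ → H, MemLp w 2 (volume.restrict (Icc 0 1)) →
      IntervalIntegrable (fun s => B (y s) (w s)) volume 0 t := fun w hw =>
    iL2 (hBy.memLp_clm_apply isCompact_Icc hw)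
  have iD : IntervalIntegrable (fun s => f (x s) - f (y s) + (B (x s) - B (y s)) (u s))
      volume 0 t :=
    ((hfx.sub hfy).mono hsub).intervalIntegrable.add
      (iL2 (((hB.comp_continuousOn hx.1).sub hBy).memLp_clm_apply isCompact_Icc hu))
  have hxD : ∫ s in 0..t, (f (x s) + B (x s) (u s))
      = (∫ s in 0..t, (f (x s) - f (y s) + (B (x s) - B (y s)) (u s)))
        + (∫ s in 0..t, f (y s)) + ∫ s in 0..t, B (y s) (u s) := by
    rw [← intervalIntegral.integral_add iD iFy, ← intervalIntegral.integral_add (iD.add iFy)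
      (iBy u hu)]
    congr with s
    simp only [sub_apply]
    abel
  rw [hx.2 t ht, hy.2 t ht, hxD, intervalIntegral.integral_add iFy (iBy v hv)]
  abel

theorem IsAffineControlTrajectory.norm_sub_le_add_integral (hf : LipschitzWith Kf f)
    (hB : LipschitzWith KB B) (hx : IsAffineControlTrajectory f B ξ u x)
    (hy : IsAffineControlTrajectory f B ξ v y) (hu : MemLp u 2 (volume.restrict (Icc 0 1)))
    (hv : MemLp v 2 (volume.restrict (Icc 0 1))) :
    ∀ t ∈ Icc (0 : ℝ) 1, ‖x t - y t‖ ≤ ‖(∫ s in 0..t, B (y s) (u s)) - ∫ s in 0..t, B (y s) (v s)‖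
      + ∫ s in 0..t, (Kf + KB * ‖u s‖) * ‖x s - y s‖ := by
  intro t ht
  have iφψ : IntervalIntegrable (fun s => (Kf + KB * ‖u s‖) * ‖x s - y s‖) volume 0 t :=
    ((IntegrableOn.mul_continuousOn
      (((memLp_const (Kf : ℝ)).add (hu.norm.const_mul KB)).integrable one_le_two)
      (hx.1.sub hy.1).norm isCompact_Icc).mono_set
        (uIcc_subset_Icc (left_mem_Icc.mpr zero_le_one) ht)).intervalIntegrable
  have hD : ∀ s, ‖f (x s) - f (y s) + (B (x s) - B (y s)) (u s)‖
      ≤ (Kf + KB * ‖u s‖) * ‖x s - y s‖ := fun s =>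
    calc _ ≤ Kf * ‖x s - y s‖ + ‖B (x s) - B (y s)‖ * ‖u s‖ :=
          (norm_add_le _ _).trans
            (add_le_add (hf.norm_sub_le _ _) ((B (x s) - B (y s)).le_opNorm _))
      _ ≤ Kf * ‖x s - y s‖ + KB * ‖x s - y s‖ * ‖u s‖ := by gcongr; exact hB.norm_sub_le _ _
      _ = (Kf + KB * ‖u s‖) * ‖x s - y s‖ := by ring
  rw [hx.sub_eq hf.continuous hB.continuous hy hu hv t ht, add_comm]
  exact (norm_add_le _ _).trans (add_le_add_right
    (intervalIntegral.norm_integral_le_of_norm_le ht.1 (Eventually.of_forall fun s _ => hD s)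
      iφψ) _)

theorem IsAffineControlTrajectory.norm_sub_le_mul (hf : LipschitzWith Kf f)
    (hB : LipschitzWith KB B) (hx : IsAffineControlTrajectory f B ξ u x)
    (hy : IsAffineControlTrajectory f B ξ v y) (hu : MemLp u 2 (volume.restrict (Icc 0 1)))
    (hv : MemLp v 2 (volume.restrict (Icc 0 1))) {C β η : ℝ}
    (hC : ∫ s in Icc 0 1, ‖u s‖ ^ 2 ≤ C) (hβ0 : 0 ≤ β) (hβ : 2 * (Kf ^ 2 + KB ^ 2 * C) ≤ β ^ 2)
    (hη : ∀ t ∈ Icc (0 : ℝ) 1,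
      ‖(∫ s in 0..t, B (y s) (u s)) - ∫ s in 0..t, B (y s) (v s)‖ ≤ η) :
    ∀ t ∈ Icc (0 : ℝ) 1,
      ‖x t - y t‖ ≤ η * (1 + β * √(2 * gronwallBound 0 (2 * β ^ 2) 1 1)) := by
  have hφ : MemLp (fun s => Kf + KB * ‖u s‖) 2 (volume.restrict (Icc 0 1)) :=
    (memLp_const (Kf : ℝ)).add (hu.norm.const_mul KB)
  have hu2 : Integrable (fun s => ‖u s‖ ^ 2) (volume.restrict (Icc 0 1)) :=
    (memLp_two_iff_integrable_sq_norm hu.1).mp hu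
  have hφβ : ∫ s in Icc 0 1, ((Kf : ℝ) + KB * ‖u s‖) ^ 2 ≤ β ^ 2 :=
    calc ∫ s in Icc 0 1, ((Kf : ℝ) + KB * ‖u s‖) ^ 2
        ≤ ∫ s in Icc 0 1, (2 * Kf ^ 2 + 2 * KB ^ 2 * ‖u s‖ ^ 2 : ℝ) :=
          integral_mono hφ.integrable_sq ((integrable_const _).add (hu2.const_mul _)) fun s => by
            nlinarith [sq_nonneg ((Kf : ℝ) - KB * ‖u s‖)]
      _ = 2 * Kf ^ 2 + 2 * KB ^ 2 * ∫ s in Icc 0 1, ‖u s‖ ^ 2 := by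
          rw [integral_add (integrable_const _) (hu2.const_mul _),
            integral_const_mul (2 * (KB : ℝ) ^ 2)]
          simp
      _ ≤ β ^ 2 := by nlinarith [sq_nonneg (KB : ℝ)]
  exact le_mul_of_le_add_integral_mul (ψ := fun s => ‖x s - y s‖) (hx.1.sub hy.1).norm
    (fun _ _ => norm_nonneg _) hφ
    ((norm_nonneg _).trans (hη 0 (left_mem_Icc.mpr zero_le_one))) hβ0 hφβ fun t ht =>
      (hx.norm_sub_le_add_integral hf hB hy hu hv t ht).trans (by gcongr; exact hη t ht)

end AffineControl

theorem EquicontinuousOn.tendstoUniformlyOn_of_tendsto {ι X α : Type*} [TopologicalSpace X]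
    [UniformSpace α] {F : ι → X → α} {f : X → α} {K : Set X} {l : Filter ι} (hK : IsCompact K)
    (hF : EquicontinuousOn F K) (h : ∀ x ∈ K, Tendsto (F · x) l (𝓝 (f x))) :
    TendstoUniformlyOn F f l K := by
  have hunif := (EquicontinuousOn.tendsto_uniformOnFun_iff_pi' (𝔖 := {K}) (by simpa using hK)
    (by simpa using hF) l f).mpr (tendsto_pi_nhds.mpr fun x => h x (by simpa using x.2))
  exact UniformOnFun.tendsto_iff_tendstoUniformlyOn.mp hunif K rfl

theorem equicontinuousOn_of_norm_sub_le_mul_sqrt {ι E : Type*} [SeminormedAddCommGroup E]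
    {G : ι → ℝ → E} {S : Set ℝ} {K : ℝ}
    (h : ∀ i, ∀ s ∈ S, ∀ t ∈ S, ‖G i s - G i t‖ ≤ K * √|s - t|) : EquicontinuousOn G S := by
  rw [← equicontinuous_restrict_iff]
  have hK : Continuous fun r => K * √r := by fun_prop
  exact Metric.equicontinuous_of_continuity_modulus (fun r => K * √r) (hK.tendsto' 0 0 (by simp)) _
    fun s t i => by simpa [dist_eq_norm, Subtype.dist_eq, Real.dist_eq] using h i s s.2 t t.2

section WeakConvergence

variable {E : Type*} [NormedAddCommGroup E] [InnerProductSpace ℝ E] [FiniteDimensional ℝ E]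

theorem tendsto_of_forall_tendsto_inner {ι : Type*} {l : Filter ι} {x : ι → E} {y : E}
    (h : ∀ e, Tendsto (fun i => inner ℝ e (x i)) l (𝓝 (inner ℝ e y))) : Tendsto x l (𝓝 y) := by
  let b := stdOrthonormalBasis ℝ E
  simpa only [b.sum_repr'] using tendsto_finsetSum Finset.univ fun j _ => (h (b j)).smul_const (b j)

theorem tendsto_integral_clm_apply_of_tendsto_integral_inner {α H : Type*} [MeasurableSpace α]
    {μ : Measure α} [IsFiniteMeasure μ] [NormedAddCommGroup H] [InnerProductSpace ℝ H]
    [CompleteSpace H] {A : α → H →L[ℝ] E} {M : ℝ} (hA : AEStronglyMeasurable A μ)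
    (hAM : ∀ᵐ a ∂μ, ‖A a‖ ≤ M) {u : ℕ → α → H} {uinf : α → H} (hu : ∀ m, MemLp (u m) 2 μ)
    (huinf : MemLp uinf 2 μ)
    (hweak : ∀ v, MemLp v 2 μ → Tendsto (fun m => ∫ a, inner ℝ (v a) (u m a) ∂μ) atTop
      (𝓝 (∫ a, inner ℝ (v a) (uinf a) ∂μ))) :
    Tendsto (fun m => ∫ a, A a (u m a) ∂μ) atTop (𝓝 (∫ a, A a (uinf a) ∂μ)) := by
  refine tendsto_of_forall_tendsto_inner fun e => ?_
  have hv : MemLp (fun a => (A a).adjoint e) 2 μ :=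
    MemLp.of_bound ((ContinuousLinearMap.adjoint.continuous.clm_apply continuous_const)
        |>.comp_aestronglyMeasurable hA) (M * ‖e‖)
      (hAM.mono fun a ha => ((A a).adjoint.le_opNorm e).trans (by
        rw [LinearIsometryEquiv.norm_map]; gcongr))
  have hinner : ∀ w, MemLp w 2 μ →
      inner ℝ e (∫ a, A a (w a) ∂μ) = ∫ a, inner ℝ ((A a).adjoint e) (w a) ∂μ := fun w hw => by
    rw [← integral_inner ((hw.clm_apply_of_norm_le hA hAM).integrable one_le_two)]
    simp only [ContinuousLinearMap.adjoint_inner_left]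
  simpa only [hinner _ (hu _), hinner _ huinf] using hweak _ hv

theorem tendstoUniformlyOn_intervalIntegral_clm_apply {H : Type*} [NormedAddCommGroup H]
    [InnerProductSpace ℝ H] [CompleteSpace H] {A : ℝ → H →L[ℝ] E} (hA : ContinuousOn A (Icc 0 1))
    {u : ℕ → ℝ → H} {uinf : ℝ → H} (hu : ∀ m, MemLp (u m) 2 (volume.restrict (Icc 0 1)))
    (huinf : MemLp uinf 2 (volume.restrict (Icc 0 1)))
    (hweak : ∀ v, MemLp v 2 (volume.restrict (Icc 0 1)) →
      Tendsto (fun m => ∫ s in Icc 0 1, inner ℝ (v s) (u m s)) atTop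
        (𝓝 (∫ s in Icc 0 1, inner ℝ (v s) (uinf s)))) :
    TendstoUniformlyOn (fun m t => ∫ s in 0..t, A s (u m s)) (fun t => ∫ s in 0..t, A s (uinf s))
      atTop (Icc 0 1) := by
  obtain ⟨M, hM⟩ := isCompact_Icc.exists_bound_of_continuousOn hA
  obtain ⟨C, hC⟩ := exists_integral_norm_sq_le_of_tendsto_integral_inner hu hweak
  have hAmeas : AEStronglyMeasurable A (volume.restrict (Icc 0 1)) :=
    hA.aestronglyMeasurable measurableSet_Icc
  have hAM : ∀ᵐ s ∂(volume.restrict (Icc (0 : ℝ) 1)), ‖A s‖ ≤ M :=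
    ae_restrict_of_forall_mem measurableSet_Icc hM
  refine EquicontinuousOn.tendstoUniformlyOn_of_tendsto isCompact_Icc ?_ fun t ht => ?_
  · exact equicontinuousOn_of_norm_sub_le_mul_sqrt fun m a ha b hb =>
      norm_sub_intervalIntegral_clm_apply_le hAmeas hAM (hu m) (hC m) ha hb
  · have hind : ∀ w : ℝ → H, ∫ s in 0..t, A s (w s)
        = ∫ s in Icc 0 1, (Ioc 0 t).indicator A s (w s) := fun w => by
      have hsub : Ioc 0 t ⊆ Icc (0 : ℝ) 1 := Ioc_subset_Icc_self.trans (Icc_subset_Icc_right ht.2)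
      have : ∀ s, (Ioc 0 t).indicator A s (w s) = (Ioc 0 t).indicator (fun s => A s (w s)) s :=
        fun s => by by_cases hs : s ∈ Ioc 0 t <;> simp [hs]
      rw [intervalIntegral.integral_of_le ht.1, integral_congr_ae (Eventually.of_forall this),
        integral_indicator measurableSet_Ioc, Measure.restrict_restrict_of_subset hsub]
    simp only [hind]
    exact tendsto_integral_clm_apply_of_tendsto_integral_inner
      (hAmeas.indicator measurableSet_Ioc)
      (hAM.mono fun _ hs => (norm_indicator_le_norm_self _ _).trans hs) hu huinf hweak

end WeakConvergence

section ControlMap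

variable {E : Type*} [NormedAddCommGroup E] [NormedSpace ℝ E] {ι : Type*} [Fintype ι]

def controlMap (v : ι → E) : EuclideanSpace ℝ ι →L[ℝ] E :=
  ∑ i, (EuclideanSpace.proj i).smulRight (v i)

@[simp]
theorem controlMap_apply (v : ι → E) (w : EuclideanSpace ℝ ι) :
    controlMap v w = ∑ i, w i • v i := by
  simp [controlMap]

theorem lipschitzWith_controlMap {X : Type*} [PseudoMetricSpace X] {F : ι → X → E} {K : NNReal}
    (hF : ∀ i, LipschitzWith K (F i)) :
    LipschitzWith (Fintype.card ι * K) fun y => controlMap fun i => F i y := by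
  refine LipschitzWith.of_dist_le_mul fun y z => ?_
  rw [dist_eq_norm]
  refine ContinuousLinearMap.opNorm_le_bound _ (by positivity) fun w => ?_
  calc ‖(controlMap fun i => F i y) w - (controlMap fun i => F i z) w‖
      = ‖∑ i, w i • (F i y - F i z)‖ := by simp [smul_sub]
    _ ≤ ∑ i, ‖w‖ * (K * dist y z) := by
      refine (norm_sum_le _ _).trans (Finset.sum_le_sum fun i _ => ?_)
      rw [norm_smul, ← dist_eq_norm]
      exact mul_le_mul (PiLp.norm_apply_le w i) ((hF i).dist_le_mul y z) dist_nonneg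
        (norm_nonneg _)
    _ = Fintype.card ι * K * dist y z * ‖w‖ := by
      rw [Finset.sum_const, Finset.card_univ, nsmul_eq_mul]; ring

end ControlMap

theorem IsAffineControlTrajectory.tendstoUniformlyOn {E H : Type*} [NormedAddCommGroup E]
    [InnerProductSpace ℝ E] [FiniteDimensional ℝ E] [NormedAddCommGroup H] [InnerProductSpace ℝ H]
    [CompleteSpace H] {f : E → E} {B : E → H →L[ℝ] E} {ξ : E} {Kf KB : NNReal}
    (hf : LipschitzWith Kf f) (hB : LipschitzWith KB B) {u : ℕ → ℝ → H} {uinf : ℝ → H}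
    (hu : ∀ m, MemLp (u m) 2 (volume.restrict (Icc 0 1)))
    (huinf : MemLp uinf 2 (volume.restrict (Icc 0 1)))
    (hweak : ∀ v, MemLp v 2 (volume.restrict (Icc 0 1)) →
      Tendsto (fun m => ∫ s in Icc 0 1, inner ℝ (v s) (u m s)) atTop
        (𝓝 (∫ s in Icc 0 1, inner ℝ (v s) (uinf s))))
    {x : ℕ → ℝ → E} {xinf : ℝ → E} (hx : ∀ m, IsAffineControlTrajectory f B ξ (u m) (x m))
    (hxinf : IsAffineControlTrajectory f B ξ uinf xinf) :
    TendstoUniformlyOn x xinf atTop (Icc 0 1) := by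
  obtain ⟨C, hC⟩ := exists_integral_norm_sq_le_of_tendsto_integral_inner hu hweak
  have hC0 : 0 ≤ C := (integral_nonneg fun _ => by positivity).trans (hC 0)
  set β := √(2 * (Kf ^ 2 + KB ^ 2 * C))
  set κ := 1 + β * √(2 * gronwallBound 0 (2 * β ^ 2) 1 1)
  have hκ : 0 < κ := by positivity
  have hΦ := Metric.tendstoUniformlyOn_iff.mp <| tendstoUniformlyOn_intervalIntegral_clm_apply
    (A := fun s => B (xinf s)) (hB.continuous.comp_continuousOn hxinf.1) hu huinf hweak
  refine Metric.tendstoUniformlyOn_iff.mpr fun ε hε => ?_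
  filter_upwards [hΦ (ε / (2 * κ)) (by positivity)] with m hm t ht
  rw [dist_comm, dist_eq_norm]
  calc ‖x m t - xinf t‖ ≤ ε / (2 * κ) * κ :=
        (hx m).norm_sub_le_mul hf hB hxinf (hu m) huinf (hC m) (Real.sqrt_nonneg _)
          (Real.sq_sqrt (by positivity)).ge
          (fun s hs => by simpa only [dist_eq_norm'] using (hm s hs).le) t ht
    _ = ε / 2 := by field_simp
    _ < ε := half_lt_self hε

theorem IsTrajectory.isAffineControlTrajectory
    {F0 : EuclideanSpace ℝ (Fin n) → EuclideanSpace ℝ (Fin d) → EuclideanSpace ℝ (Fin n)}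
    {F : Fin k → EuclideanSpace ℝ (Fin n) → EuclideanSpace ℝ (Fin d) → EuclideanSpace ℝ (Fin n)}
    {x0 : EuclideanSpace ℝ (Fin d) → EuclideanSpace ℝ (Fin n)} {u : ℝ → EuclideanSpace ℝ (Fin k)}
    {θ : EuclideanSpace ℝ (Fin d)} {x : ℝ → EuclideanSpace ℝ (Fin n)}
    (h : IsTrajectory F0 F x0 u θ x) :
    IsAffineControlTrajectory (F0 · θ) (fun y => controlMap fun i => F i y θ) (x0 θ) u x :=
  ⟨h.1, fun t ht => by simpa only [controlMap_apply] using h.2 t ht⟩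

theorem single_trajectory_weak_to_C0_general (n d k : ℕ)
    (Θ : Set (EuclideanSpace ℝ (Fin d)))
    (F0 : EuclideanSpace ℝ (Fin n) → EuclideanSpace ℝ (Fin d) → EuclideanSpace ℝ (Fin n))
    (F : Fin k → EuclideanSpace ℝ (Fin n) → EuclideanSpace ℝ (Fin d) →
      EuclideanSpace ℝ (Fin n))
    (L : ℝ)
    (hF0 : ∀ x₁ x₂ θ₁ θ₂, θ₁ ∈ Θ → θ₂ ∈ Θ →
      ‖F0 x₁ θ₁ - F0 x₂ θ₂‖ ≤ L * (‖x₁ - x₂‖ + ‖θ₁ - θ₂‖))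
    (hF : ∀ i, ∀ x₁ x₂ θ₁ θ₂, θ₁ ∈ Θ → θ₂ ∈ Θ →
      ‖F i x₁ θ₁ - F i x₂ θ₂‖ ≤ L * (‖x₁ - x₂‖ + ‖θ₁ - θ₂‖))
    (x0 : EuclideanSpace ℝ (Fin d) → EuclideanSpace ℝ (Fin n))
    (θ : EuclideanSpace ℝ (Fin d)) (hθ : θ ∈ Θ)
    (u : ℕ → ℝ → EuclideanSpace ℝ (Fin k)) (uinf : ℝ → EuclideanSpace ℝ (Fin k))
    (hu : ∀ m, MemLp (u m) 2 (volume.restrict (Icc (0 : ℝ) 1)))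
    (huinf : MemLp uinf 2 (volume.restrict (Icc (0 : ℝ) 1)))
    (hweak : WeakL2 u uinf)
    (x : ℕ → ℝ → EuclideanSpace ℝ (Fin n)) (xinf : ℝ → EuclideanSpace ℝ (Fin n))
    (hx : ∀ m, IsTrajectory F0 F x0 (u m) θ (x m))
    (hxinf : IsTrajectory F0 F x0 uinf θ xinf) :
    TendstoUniformlyOn (fun m t => x m t) xinf atTop (Icc (0 : ℝ) 1) := by
  have hLip : ∀ G : EuclideanSpace ℝ (Fin n) → EuclideanSpace ℝ (Fin d) → EuclideanSpace ℝ (Fin n),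
      (∀ x₁ x₂ θ₁ θ₂, θ₁ ∈ Θ → θ₂ ∈ Θ → ‖G x₁ θ₁ - G x₂ θ₂‖ ≤ L * (‖x₁ - x₂‖ + ‖θ₁ - θ₂‖)) →
      LipschitzWith L.toNNReal (G · θ) := fun G hG =>
    LipschitzWith.of_dist_le' fun y z => by simpa [dist_eq_norm] using hG y z θ θ hθ hθ
  exact IsAffineControlTrajectory.tendstoUniformlyOn (hLip F0 hF0)
    (lipschitzWith_controlMap fun i => hLip (F i) (hF i)) hu huinf hweak
    (fun m => (hx m).isAffineControlTrajectory) hxinf.isAffineControlTrajectory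

/-- stability of a single affine-control system under weak convergence of
controls: if `u_m ⇀ u_∞` weakly in `L²([0,1],ℝ^k)`, then the corresponding solutions
`x_m^θ` converge to `x_∞^θ` uniformly on `[0,1]`. -/
theorem single_trajectory_weak_to_C0 (n d k : ℕ)
    (Θ : Set (EuclideanSpace ℝ (Fin d))) (hΘ : IsCompact Θ)
    (F0 : EuclideanSpace ℝ (Fin n) → EuclideanSpace ℝ (Fin d) → EuclideanSpace ℝ (Fin n))
    (F : Fin k → EuclideanSpace ℝ (Fin n) → EuclideanSpace ℝ (Fin d) →
      EuclideanSpace ℝ (Fin n))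
    (L : ℝ)
    (hF0 : ∀ x₁ x₂ θ₁ θ₂, θ₁ ∈ Θ → θ₂ ∈ Θ →
      ‖F0 x₁ θ₁ - F0 x₂ θ₂‖ ≤ L * (‖x₁ - x₂‖ + ‖θ₁ - θ₂‖))
    (hF : ∀ i, ∀ x₁ x₂ θ₁ θ₂, θ₁ ∈ Θ → θ₂ ∈ Θ →
      ‖F i x₁ θ₁ - F i x₂ θ₂‖ ≤ L * (‖x₁ - x₂‖ + ‖θ₁ - θ₂‖))
    (x0 : EuclideanSpace ℝ (Fin d) → EuclideanSpace ℝ (Fin n))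
    (hx0 : ContinuousOn x0 Θ)
    (θ : EuclideanSpace ℝ (Fin d)) (hθ : θ ∈ Θ)
    (u : ℕ → ℝ → EuclideanSpace ℝ (Fin k)) (uinf : ℝ → EuclideanSpace ℝ (Fin k))
    (hu : ∀ m, MemLp (u m) 2 (volume.restrict (Icc (0 : ℝ) 1)))
    (huinf : MemLp uinf 2 (volume.restrict (Icc (0 : ℝ) 1)))
    (hweak : WeakL2 u uinf)
    (x : ℕ → ℝ → EuclideanSpace ℝ (Fin n)) (xinf : ℝ → EuclideanSpace ℝ (Fin n))
    (hx : ∀ m, IsTrajectory F0 F x0 (u m) θ (x m))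
    (hxinf : IsTrajectory F0 F x0 uinf θ xinf) :
    TendstoUniformlyOn (fun m t => x m t) xinf atTop (Icc (0 : ℝ) 1) :=
  single_trajectory_weak_to_C0_general n d k Θ F0 F L hF0 hF x0 θ hθ u uinf hu huinf hweak x xinf hx
    hxinf
end
end

section
/- Consider the ensemble of 2D linear systems ẋ^θ = A^θ x^θ + b₁u₁ + b₂u₂ with A^θ = [[0,1],[θ,0]], b₁ = (1,0)ᵀ, b₂ = (0,1)ᵀ. For any N ≥ 1 and any distinct parameters θ₁,…,θ_N ∈ Θ, the block-diagonal system on ℝ^{2N} with matrix A^N = diag(A^{θ₁},…,A^{θ_N}) and stacked control vectors b₁ = (b₁,…,b₁)ᵀ, b₂ = (b₂,…,b₂)ᵀ satisfies the Kalman rank condition: span{(A^N)^r b₁, (A^N)^r b₂ : 0 ≤ r ≤ 2N−1} = ℝ^{2N}. Consequently, for any target y_tar ∈ ℝ^{2N} there exists a control ū ∈ L²([0,1],ℝ²) steering the stacked system from any initial state to y_tar at time 1. -/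
/-!
Since `(A^θ)² = θ I`, the even powers of `A^N` are diagonal, `(A^N)^{2k} = diag(θ_j^k)`, so the
Kalman vectors `(A^N)^{2k} 𝐛ᵢ`, `k < N`, already span `ℝ^{2N}`: their coefficients are governed
by the Vandermonde matrix of the distinct `θ_j`.

For any `T` and inputs `bᵢ`, the rank condition gives exact controllability through the
Gramian `G φ = ∫₀¹ e^{(1-s)T} ∑ᵢ φ(e^{(1-s)T} bᵢ) bᵢ ds`, a linear map on the dual space.
If `G` were not onto, a nonzero `φ` vanishing on its range would give
`φ (G φ) = ∫₀¹ ∑ᵢ φ(e^{(1-s)T} bᵢ)² ds = 0`, so `τ ↦ φ(e^{τT} bᵢ)` vanishes on `[0,1]`;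
differentiating repeatedly, `φ(Tʳ bᵢ) = 0` for all `r`, contradicting the rank condition.
By variation of constants, the control `uᵢ(s) = φ(e^{(1-s)T} bᵢ)` with `G φ = y - e^T x₀`
steers `x₀` to `y`.
-/

open MeasureTheory Set Filter Topology

noncomputable section

/-- The matrix `A^θ = [[0,1],[θ,0]]`. -/
def Amat (θ : ℝ) : Matrix (Fin 2) (Fin 2) ℝ := !![0, 1; θ, 0]

/-- The block-diagonal matrix `A^N = diag(A^{θ₁},…,A^{θ_N})` on `ℝ^{2N}`,
indexed by `Fin N × Fin 2`. -/
def blockA {N : ℕ} (θs : Fin N → ℝ) : Matrix (Fin N × Fin 2) (Fin N × Fin 2) ℝ :=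
  fun p q => if p.1 = q.1 then Amat (θs p.1) p.2 q.2 else 0

/-- The stacked control vector `𝐛ᵢ = (bᵢ,…,bᵢ)ᵀ ∈ ℝ^{2N}` with `b₁ = (1,0)ᵀ`,
`b₂ = (0,1)ᵀ`. -/
def bstack {N : ℕ} (i : Fin 2) : Fin N × Fin 2 → ℝ := fun p => if p.2 = i then 1 else 0

theorem eqOn_zero_of_intervalIntegral_eq_zero {f : ℝ → ℝ} {a b : ℝ} (hab : a < b)
    (hf : ContinuousOn f (Icc a b)) (hf₀ : ∀ x ∈ Icc a b, 0 ≤ f x) (h : ∫ x in a..b, f x = 0) :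
    EqOn f 0 (Icc a b) := fun c hc => by
  by_contra hne
  exact (intervalIntegral.integral_pos hab hf (fun x hx => hf₀ x (Ioc_subset_Icc_self hx))
    ⟨c, hc, (hf₀ c hc).lt_of_ne (Ne.symm hne)⟩).ne' h

open NormedSpace (exp)

section LinearControl

variable {E : Type*} [NormedAddCommGroup E] [NormedSpace ℝ E] [CompleteSpace E] (T : E →L[ℝ] E)

@[fun_prop]
theorem Continuous.exp_smul {X : Type*} [TopologicalSpace X] {f : X → ℝ} (hf : Continuous f) :
    Continuous fun x => exp (f x • T) :=
  (differentiable_exp_smul_const ℝ T).continuous.comp hf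

theorem hasDerivAt_exp_smul_apply (z : E) (t : ℝ) :
    HasDerivAt (fun s : ℝ => exp (s • T) z) (exp (t • T) (T z)) t := by
  simpa using (hasDerivAt_exp_smul_const T t).clm_apply (hasDerivAt_const t z)

theorem exp_smul_apply_exp_smul_apply (a c : ℝ) (z : E) :
    exp (a • T) (exp (c • T) z) = exp ((a + c) • T) z := by
  have hr : ∀ y : E →L[ℝ] E, y ∈ Metric.eball 0 (NormedSpace.expSeries ℝ (E →L[ℝ] E)).radius :=
    fun y => (NormedSpace.expSeries_radius_eq_top ℝ (E →L[ℝ] E)).symm ▸ edist_lt_top _ _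
  rw [add_smul, NormedSpace.exp_add_of_commute_of_mem_ball
    (((Commute.refl T).smul_left a).smul_right c) (hr _) (hr _)]
  rfl

theorem exists_solution_of_continuous_forcing (x₀ : E) {w : ℝ → E} (hw : Continuous w) :
    ∃ x : ℝ → E, Continuous x ∧ (∀ t, x t = x₀ + ∫ s in (0 : ℝ)..t, (T (x s) + w s)) ∧
      x 1 = exp T x₀ + ∫ s in (0 : ℝ)..1, exp ((1 - s) • T) (w s) := by
  have hv : Continuous fun s => exp ((-s) • T) (w s) := by fun_prop
  set x : ℝ → E := fun t => exp (t • T) (x₀ + ∫ s in (0 : ℝ)..t, exp ((-s) • T) (w s))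
  have hx : ∀ t, HasDerivAt x (T (x t) + w t) t := fun t => by
    convert (hasDerivAt_exp_smul_const' T t).clm_apply
      ((hv.integral_hasStrictDerivAt 0 t).hasDerivAt.const_add x₀) using 1
    rw [exp_smul_apply_exp_smul_apply, add_neg_cancel, zero_smul, NormedSpace.exp_zero]
    rfl
  have hxc : Continuous x := continuous_iff_continuousAt.2 fun t => (hx t).continuousAt
  refine ⟨x, hxc, fun t => ?_, ?_⟩
  · rw [intervalIntegral.integral_eq_sub_of_hasDerivAt (fun s _ => hx s)
      (((T.continuous.comp hxc).add hw).intervalIntegrable 0 t)]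
    simp [x]
  · simp only [x, one_smul, map_add, add_right_inj]
    rw [← (exp T).intervalIntegral_comp_comm (hv.intervalIntegrable 0 1)]
    refine intervalIntegral.integral_congr fun s _ => ?_
    simpa [sub_eq_add_neg] using exp_smul_apply_exp_smul_apply T 1 (-s) (w s)

theorem eqOn_zero_apply_exp_smul_apply_self {F : Type*} [NormedAddCommGroup F] [NormedSpace ℝ F]
    (L : E →L[ℝ] F) {z : E} {S : Set ℝ} (hS : UniqueDiffOn ℝ S)
    (h : EqOn (fun τ => L (exp (τ • T) z)) 0 S) :
    EqOn (fun τ => L (exp (τ • T) (T z))) 0 S := fun τ hτ =>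
  (hS τ hτ).eq_deriv S
    (L.hasFDerivAt.comp_hasDerivAt τ (hasDerivAt_exp_smul_apply T z τ)).hasDerivWithinAt
    ((hasDerivWithinAt_const τ S 0).congr h (h hτ))

theorem apply_pow_apply_eq_zero_of_eqOn_zero {F : Type*} [NormedAddCommGroup F] [NormedSpace ℝ F]
    (L : E →L[ℝ] F) {z : E} {S : Set ℝ} (hS : UniqueDiffOn ℝ S) (h0 : 0 ∈ S)
    (h : EqOn (fun τ => L (exp (τ • T) z)) 0 S) (r : ℕ) : L ((T ^ r) z) = 0 := by
  induction r generalizing z with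
  | zero => simpa using h h0
  | succ r ih => exact ih (eqOn_zero_apply_exp_smul_apply_self T L hS h)

variable {ι : Type*} (b : ι → E)

def gramianControl (φ : E →L[ℝ] ℝ) (s : ℝ) (i : ι) : ℝ := φ (exp ((1 - s) • T) (b i))

theorem continuous_gramianControl (φ : E →L[ℝ] ℝ) : Continuous (gramianControl T b φ) := by
  unfold gramianControl; fun_prop

variable [Fintype ι]

theorem continuous_exp_smul_apply_sum_gramianControl_smul (φ : E →L[ℝ] ℝ) :
    Continuous fun s => exp ((1 - s) • T) (∑ i, gramianControl T b φ s i • b i) := by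
  have := continuous_gramianControl T b φ
  fun_prop

def controllabilityGramian : (E →L[ℝ] ℝ) →ₗ[ℝ] E where
  toFun φ := ∫ s in (0 : ℝ)..1, exp ((1 - s) • T) (∑ i, gramianControl T b φ s i • b i)
  map_add' φ ψ := by
    rw [← intervalIntegral.integral_add
      ((continuous_exp_smul_apply_sum_gramianControl_smul T b φ).intervalIntegrable 0 1)
      ((continuous_exp_smul_apply_sum_gramianControl_smul T b ψ).intervalIntegrable 0 1)]
    refine intervalIntegral.integral_congr fun s _ => ?_
    simp [gramianControl, add_smul, Finset.sum_add_distrib]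
  map_smul' c φ := by
    rw [RingHom.id_apply, ← intervalIntegral.integral_smul]
    refine intervalIntegral.integral_congr fun s _ => ?_
    simp [gramianControl, mul_smul, Finset.smul_sum]

theorem apply_controllabilityGramian_self (φ : E →L[ℝ] ℝ) :
    φ (controllabilityGramian T b φ) = ∫ s in (0 : ℝ)..1, ∑ i, gramianControl T b φ s i ^ 2 := by
  rw [controllabilityGramian, LinearMap.coe_mk, AddHom.coe_mk, ← φ.intervalIntegral_comp_comm
    ((continuous_exp_smul_apply_sum_gramianControl_smul T b φ).intervalIntegrable 0 1)]
  refine intervalIntegral.integral_congr fun s _ => ?_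
  simp [gramianControl, sq]

theorem controllabilityGramian_surjective [FiniteDimensional ℝ E]
    (hspan : Submodule.span ℝ (range fun p : ℕ × ι => (T ^ p.1) (b p.2)) = ⊤) :
    Function.Surjective (controllabilityGramian T b) := by
  rw [← LinearMap.range_eq_top]
  by_contra hne
  obtain ⟨f, hf, hle⟩ := (LinearMap.range _).exists_le_ker_of_lt_top (lt_top_iff_ne_top.2 hne)
  set φ := LinearMap.toContinuousLinearMap f
  have hint : ∫ s in (0 : ℝ)..1, ∑ i, gramianControl T b φ s i ^ 2 = 0 := by
    rw [← apply_controllabilityGramian_self]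
    exact hle (LinearMap.mem_range_self _ φ)
  have hcont : Continuous fun s => ∑ i, gramianControl T b φ s i ^ 2 := by
    have := continuous_gramianControl T b φ
    fun_prop
  have hzero : ∀ i, EqOn (fun τ : ℝ => φ (exp (τ • T) (b i))) 0 (Icc 0 1) := by
    intro i τ hτ
    have hs : 1 - τ ∈ Icc (0 : ℝ) 1 := ⟨by linarith [hτ.2], by linarith [hτ.1]⟩
    have hsum := eqOn_zero_of_intervalIntegral_eq_zero one_pos hcont.continuousOn
      (fun _ _ => by positivity) hint hs
    rw [Pi.zero_apply, Finset.sum_eq_zero_iff_of_nonneg (fun _ _ => sq_nonneg _)] at hsum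
    simpa [gramianControl] using hsum i (Finset.mem_univ i)
  have hker : Submodule.span ℝ (range fun p : ℕ × ι => (T ^ p.1) (b p.2)) ≤ LinearMap.ker f := by
    rw [Submodule.span_le]
    rintro _ ⟨⟨r, i⟩, rfl⟩
    exact apply_pow_apply_eq_zero_of_eqOn_zero T φ uniqueDiffOn_Icc_zero_one
      ⟨le_rfl, zero_le_one⟩ (hzero i) r
  rw [hspan, top_le_iff, LinearMap.ker_eq_top] at hker
  exact hf hker

theorem exists_control_steering_of_span_eq_top [FiniteDimensional ℝ E]
    (hspan : Submodule.span ℝ (range fun p : ℕ × ι => (T ^ p.1) (b p.2)) = ⊤) (x₀ y : E) :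
    ∃ u : ℝ → ι → ℝ, Continuous u ∧ ∃ x : ℝ → E, Continuous x ∧
      (∀ t, x t = x₀ + ∫ s in (0 : ℝ)..t, (T (x s) + ∑ i, u s i • b i)) ∧ x 1 = y := by
  obtain ⟨φ, hφ⟩ := controllabilityGramian_surjective T b hspan (y - exp T x₀)
  have hu := continuous_gramianControl T b φ
  obtain ⟨x, hx, hint, hx₁⟩ := exists_solution_of_continuous_forcing T x₀
    (w := fun s => ∑ i, gramianControl T b φ s i • b i) (by fun_prop)
  refine ⟨_, hu, x, hx, hint, ?_⟩
  rw [hx₁, ← add_sub_cancel (exp T x₀) y, ← hφ]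
  rfl

end LinearControl

theorem Matrix.toLin'_toContinuousLinearMap_pow_apply {𝕜 n : Type*} [NontriviallyNormedField 𝕜]
    [CompleteSpace 𝕜] [Fintype n] [DecidableEq n] (A : Matrix n n 𝕜) (r : ℕ) (z : n → 𝕜) :
    (LinearMap.toContinuousLinearMap (Matrix.toLin' A) ^ r) z = (A ^ r).mulVec z := by
  rw [← ContinuousLinearMap.coe_coe, ContinuousLinearMap.toLinearMap_pow,
    LinearMap.coe_toContinuousLinearMap, ← Matrix.toLin'_pow, Matrix.toLin'_apply]

theorem Continuous.memLp_restrict_Icc {F : Type*} [NormedAddCommGroup F] {f : ℝ → F}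
    (hf : Continuous f) (p : ENNReal) (a b : ℝ) : MemLp f p (volume.restrict (Icc a b)) := by
  obtain ⟨C, hC⟩ := isCompact_Icc.exists_bound_of_continuousOn hf.continuousOn
  exact MemLp.of_bound hf.aestronglyMeasurable C
    ((ae_restrict_iff' measurableSet_Icc).2 (ae_of_all _ hC))

theorem Amat_mul_self (θ : ℝ) : Amat θ * Amat θ = θ • 1 := by
  ext i j
  fin_cases i <;> fin_cases j <;> simp [Amat, Matrix.mul_apply, Fin.sum_univ_two]

theorem blockA_mul_self {N : ℕ} (θs : Fin N → ℝ) :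
    blockA θs * blockA θs = Matrix.diagonal fun p => θs p.1 := by
  ext ⟨j, a⟩ ⟨j', a'⟩
  rw [Matrix.mul_apply, Fintype.sum_prod_type]
  simp only [blockA, ite_mul, zero_mul]
  by_cases h : j = j'
  · subst h
    simp [← Matrix.mul_apply, Amat_mul_self, Matrix.one_apply, Matrix.diagonal_apply]
  · simp [h]

theorem blockA_pow_two_mul_mulVec_bstack {N : ℕ} (θs : Fin N → ℝ) (k : ℕ) (i : Fin 2) :
    (blockA θs ^ (2 * k)).mulVec (bstack i) = fun p => θs p.1 ^ k * bstack i p := by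
  rw [pow_mul, sq, blockA_mul_self, Matrix.diagonal_pow]
  ext p
  simp [Matrix.mulVec_diagonal]

theorem span_blockA_pow_mulVec_bstack_eq_top {N : ℕ} {θs : Fin N → ℝ}
    (hinj : Function.Injective θs) :
    Submodule.span ℝ {v : Fin N × Fin 2 → ℝ | ∃ r ≤ 2 * N - 1,
        v = (blockA θs ^ r).mulVec (bstack 0) ∨ v = (blockA θs ^ r).mulVec (bstack 1)} = ⊤ := by
  rw [eq_top_iff]
  rintro y -
  have hV : Function.Surjective (Matrix.vandermonde θs).mulVec :=
    Matrix.mulVec_surjective_iff_isUnit.2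
      ((Matrix.isUnit_iff_isUnit_det _).2 (Matrix.det_vandermonde_ne_zero_iff.2 hinj).isUnit)
  choose c hc using fun i : Fin 2 => hV fun j => y (j, i)
  have hy : y = ∑ k : Fin N, ∑ i : Fin 2,
      c i k • (blockA θs ^ (2 * (k : ℕ))).mulVec (bstack i) := by
    ext ⟨j, a⟩
    rw [← congrFun (hc a) j]
    simp only [Finset.sum_apply, Pi.smul_apply, blockA_pow_two_mul_mulVec_bstack, smul_eq_mul]
    simp [bstack, Matrix.mulVec, dotProduct, mul_comm]
  rw [hy]
  refine Submodule.sum_mem _ fun k _ => Submodule.sum_mem _ fun i _ =>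
    Submodule.smul_mem _ _ (Submodule.subset_span ⟨2 * k, by omega, ?_⟩)
  fin_cases i
  exacts [Or.inl rfl, Or.inr rfl]

theorem kalman_rank_and_exact_controllability_general (N : ℕ) (θs : Fin N → ℝ)
    (hinj : Function.Injective θs) :
    (Submodule.span ℝ {v : Fin N × Fin 2 → ℝ | ∃ r ≤ 2 * N - 1,
        v = (blockA θs ^ r).mulVec (bstack 0) ∨
        v = (blockA θs ^ r).mulVec (bstack 1)} = ⊤) ∧
    ∀ x0 ytar : Fin N × Fin 2 → ℝ,
      ∃ u : ℝ → EuclideanSpace ℝ (Fin 2),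
        MemLp u 2 (volume.restrict (Icc (0 : ℝ) 1)) ∧
        ∃ x : ℝ → (Fin N × Fin 2 → ℝ), Continuous x ∧
          (∀ t ∈ Icc (0 : ℝ) 1,
            x t = x0 + ∫ s in (0 : ℝ)..t,
              ((blockA θs).mulVec (x s) + u s 0 • bstack 0 + u s 1 • bstack 1)) ∧
          x 1 = ytar := by
  have hspan := span_blockA_pow_mulVec_bstack_eq_top hinj
  refine ⟨hspan, fun x₀ y => ?_⟩
  set T := LinearMap.toContinuousLinearMap (Matrix.toLin' (blockA θs))
  have hT : Submodule.span ℝ (range fun p : ℕ × Fin 2 => (T ^ p.1) (bstack p.2)) = ⊤ := by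
    refine eq_top_mono (Submodule.span_mono ?_) hspan
    rintro v ⟨r, -, rfl | rfl⟩
    exacts [⟨(r, 0), Matrix.toLin'_toContinuousLinearMap_pow_apply _ r _⟩,
      ⟨(r, 1), Matrix.toLin'_toContinuousLinearMap_pow_apply _ r _⟩]
  obtain ⟨u, hu, x, hx, hint, hx₁⟩ := exists_control_steering_of_span_eq_top T bstack hT x₀ y
  refine ⟨fun s => WithLp.toLp 2 (u s), (PiLp.continuous_toLp 2 _ |>.comp hu).memLp_restrict_Icc
    2 0 1, x, hx, fun t _ => ?_, hx₁⟩
  simpa [T, Fin.sum_univ_two, add_assoc] using hint t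

/-- for pairwise distinct parameters `θ₁,…,θ_N ∈ Θ = [θ_min,θ_max]`, the
stacked system on `ℝ^{2N}` satisfies the Kalman rank condition
`span{(A^N)^r 𝐛₁, (A^N)^r 𝐛₂ : 0 ≤ r ≤ 2N−1} = ℝ^{2N}`; consequently, for any target
`y_tar ∈ ℝ^{2N}` and any initial state there exists a control
`ū ∈ L²([0,1],ℝ²)` steering the stacked system to `y_tar` at time `1`. -/
theorem kalman_rank_and_exact_controllability (N : ℕ) (hN : 1 ≤ N)
    (θmin θmax : ℝ) (θs : Fin N → ℝ)
    (hθ : ∀ j, θs j ∈ Icc θmin θmax) (hinj : Function.Injective θs) :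
    (Submodule.span ℝ {v : Fin N × Fin 2 → ℝ | ∃ r ≤ 2 * N - 1,
        v = (blockA θs ^ r).mulVec (bstack 0) ∨
        v = (blockA θs ^ r).mulVec (bstack 1)} = ⊤) ∧
    ∀ x0 ytar : Fin N × Fin 2 → ℝ,
      ∃ u : ℝ → EuclideanSpace ℝ (Fin 2),
        MemLp u 2 (volume.restrict (Icc (0 : ℝ) 1)) ∧
        ∃ x : ℝ → (Fin N × Fin 2 → ℝ), Continuous x ∧
          (∀ t ∈ Icc (0 : ℝ) 1,
            x t = x0 + ∫ s in (0 : ℝ)..t,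
              ((blockA θs).mulVec (x s) + u s 0 • bstack 0 + u s 1 • bstack 1)) ∧
          x 1 = ytar :=
  kalman_rank_and_exact_controllability_general N θs hinj
end
end
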